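/- arXiv:1109.0901 — 4 statements merged into one kernel-verified Lean document; each statement's English description precedes it below -/
import Mathlib

section
/- Let L be a finite field extension of ℚ and let n be a natural number. Then there exists y ∈ L such that for every k with 1 ≤ k ≤ n, the element y^k is a primitive element, i.e. ℚ(y^k) = L. -/
/-!
If `y ^ n!` generates `L`, then so does every `y ^ k` with `1 ≤ k ≤ n`, since `y ^ n!` is a power
of `y ^ k`. To find such a `y`, start from a primitive element `x` and take `y = t + x` for
`t ∈ ℚ`. For each of the finitely many proper intermediate fields `F`, pick a linear form `φ`
vanishing on `F` with `φ x ≠ 0`; then `t ↦ φ ((t + x) ^ N)` is a polynomial in `t` whose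
coefficient of `t ^ (N - 1)` is `N φ x ≠ 0`, so `(t + x) ^ N ∈ F` for only finitely many `t`.
-/

open IntermediateField Polynomial Finset

section

variable {K L : Type*} [Field K]

theorem finite_setOf_apply_add_pow_eq_zero [CommRing L] [Algebra K L] (φ : L →ₗ[K] K) {x : L}
    (hx : φ x ≠ 0) {N : ℕ} (hN : (N : K) ≠ 0) :
    {t : K | φ ((algebraMap K L t + x) ^ N) = 0}.Finite := by
  set Q : K[X] := ∑ m ∈ range (N + 1), monomial m (N.choose m • φ (x ^ (N - m)))
  have hN1 : 1 ≤ N := Nat.one_le_iff_ne_zero.mpr (by rintro rfl; exact hN Nat.cast_zero)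
  have hQ : Q.coeff (N - 1) = N • φ x := by
    simp only [Q, finsetSum_coeff, coeff_monomial, sum_ite_eq', mem_range]
    simp [Nat.sub_sub_self hN1, Nat.choose_symm hN1]
  have heval (t : K) : Q.eval t = φ ((algebraMap K L t + x) ^ N) := by
    simp only [Q, eval_finsetSum, eval_monomial, add_pow, map_sum, ← map_pow]
    refine sum_congr rfl fun m _ => ?_
    rw [mul_assoc, ← Algebra.smul_def, mul_comm _ (N.choose m : L), ← nsmul_eq_mul, map_smul,
      map_nsmul, smul_eq_mul, mul_comm]
  have hQ0 : Q ≠ 0 := fun h => hx (by simpa [h, eq_comm, hN] using hQ)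
  refine (finite_setOfPred_isRoot hQ0).subset fun t ht => ?_
  simpa [IsRoot, heval] using ht

variable [Field L] [Algebra K L]

theorem finite_setOf_add_pow_mem {M : Submodule K L} {x : L} (hx : x ∉ M) {N : ℕ}
    (hN : (N : K) ≠ 0) : {t : K | (algebraMap K L t + x) ^ N ∈ M}.Finite := by
  obtain ⟨φ, hφx, hMφ⟩ := M.exists_le_ker_of_notMem hx
  exact (finite_setOf_apply_add_pow_eq_zero φ hφx hN).subset fun t ht => hMφ ht

theorem exists_adjoin_pow_eq_top [Infinite K] [Finite (IntermediateField K L)] {N : ℕ}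
    (hN : (N : K) ≠ 0) : ∃ y : L, K⟮y ^ N⟯ = ⊤ := by
  obtain ⟨x, hx⟩ := Field.exists_primitive_element_of_finite_intermediateField K L ⊤
  have hbad : (⋃ F ∈ {F : IntermediateField K L | F ≠ ⊤},
      {t : K | (algebraMap K L t + x) ^ N ∈ F}).Finite :=
    (Set.toFinite _).biUnion fun F hF =>
      finite_setOf_add_pow_mem (M := F.toSubalgebra.toSubmodule)
        (fun hxF => hF (top_le_iff.mp (hx ▸ adjoin_simple_le_iff.mpr hxF))) hN
  obtain ⟨t, ht⟩ := hbad.exists_notMem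
  exact ⟨algebraMap K L t + x, by_contra fun htop => ht
    (Set.mem_biUnion htop (mem_adjoin_simple_self K _))⟩

theorem adjoin_pow_eq_top_of_dvd {y : L} {k M : ℕ} (hkM : k ∣ M) (hy : K⟮y ^ M⟯ = ⊤) :
    K⟮y ^ k⟯ = ⊤ := by
  obtain ⟨m, rfl⟩ := hkM
  refine top_le_iff.mp (hy ▸ adjoin_simple_le_iff.mpr ?_)
  rw [pow_mul]
  exact pow_mem (mem_adjoin_simple_self K _) m

end

/-- For a finite extension `L` of `ℚ` and any `n`, there exists `y ∈ L` such that
`y, y², …, yⁿ` are all primitive elements, i.e. `ℚ(yᵏ) = L` for `1 ≤ k ≤ n`. -/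
theorem exists_power_primitive_element (L : Type*) [Field L] [Algebra ℚ L]
    [FiniteDimensional ℚ L] (n : ℕ) :
    ∃ y : L, ∀ k : ℕ, 1 ≤ k → k ≤ n → IntermediateField.adjoin ℚ {y ^ k} = ⊤ := by
  have := Field.finite_intermediateField_of_exists_primitive_element ℚ L
    (Field.exists_primitive_element ℚ L)
  obtain ⟨y, hy⟩ := exists_adjoin_pow_eq_top (K := ℚ) (L := L)
    (Nat.cast_ne_zero.mpr n.factorial_ne_zero)
  exact ⟨y, fun k hk hkn => adjoin_pow_eq_top_of_dvd (Nat.dvd_factorial hk hkn) hy⟩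
end

section
/- Let L be a finite extension of ℚ and x ∈ L a primitive element (ℚ(x) = L). Fix k ∈ ℕ with k ≥ 1. If i₁, …, i_{k+1} are pairwise distinct natural numbers such that the fields ℚ((x + i₁)^k), …, ℚ((x + i_{k+1})^k) are all equal to a common field M, then M = L. -/
/-!
Expanding binomially, `(x + a)^k = ∑ₘ C(k, m) aᵐ x^(k-m)`, so the coefficients of the
`k + 1` powers `(x + aⱼ)^k` with respect to `x^k, …, x, 1` form the matrix `V · diag(C(k, m))`,
with `V` the Vandermonde matrix of the distinct shifts `aⱼ`. This matrix is invertible in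
characteristic zero, so every `xᵐ` with `m ≤ k`, and in particular `x` itself when `k ≥ 1`,
is a rational combination of the `(x + aⱼ)^k`.
-/

open Submodule

theorem mem_span_range_sum_smul_of_isUnit_det {R V ι : Type*} [CommRing R] [AddCommMonoid V]
    [Module R V] [Fintype ι] [DecidableEq ι] (P : Matrix ι ι R) (hP : IsUnit P.det)
    (v : ι → V) (n : ι) : v n ∈ span R (Set.range fun j => ∑ m, P j m • v m) := by
  have hv : v n = ∑ j, P⁻¹ n j • ∑ m, P j m • v m := by
    simp_rw [Finset.smul_sum, smul_smul]
    rw [Finset.sum_comm]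
    simp_rw [← Finset.sum_smul, ← Matrix.mul_apply, Matrix.nonsing_inv_mul P hP,
      Matrix.one_apply, ite_smul, one_smul, zero_smul, Finset.sum_ite_eq, Finset.mem_univ,
      if_true]
  rw [hv]
  exact sum_mem fun j _ => smul_mem _ _ (subset_span ⟨j, rfl⟩)

theorem det_vandermonde_mul_diagonal_choose_ne_zero {K : Type*} [Field K] [CharZero K] {k : ℕ}
    {a : Fin (k + 1) → K} (ha : Function.Injective a) :
    (Matrix.vandermonde a * Matrix.diagonal fun m : Fin (k + 1) => (k.choose m : K)).det ≠ 0 := by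
  rw [Matrix.det_mul, Matrix.det_diagonal]
  refine mul_ne_zero (Matrix.det_vandermonde_ne_zero_iff.mpr ha) ?_
  exact Finset.prod_ne_zero_iff.mpr fun m _ =>
    Nat.cast_ne_zero.mpr (Nat.choose_pos (Nat.lt_succ_iff.mp m.isLt)).ne'

theorem add_algebraMap_pow_eq_sum {K A : Type*} [CommRing K] [CommSemiring A] [Algebra K A]
    (x : A) (k : ℕ) (a : Fin (k + 1) → K) (j : Fin (k + 1)) :
    (x + algebraMap K A (a j)) ^ k =
      ∑ m, (Matrix.vandermonde a * Matrix.diagonal fun m : Fin (k + 1) => (k.choose m : K)) j m •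
        x ^ (k - m : ℕ) := by
  rw [add_comm, add_pow, ← Fin.sum_univ_eq_sum_range]
  refine Finset.sum_congr rfl fun m _ => ?_
  simp only [Matrix.mul_diagonal, Matrix.vandermonde_apply, Algebra.smul_def, map_mul, map_pow,
    map_natCast]
  ring

theorem pow_mem_span_range_add_algebraMap_pow {K A : Type*} [Field K] [CharZero K] [CommSemiring A]
    [Algebra K A] (x : A) {k : ℕ} {a : Fin (k + 1) → K} (ha : Function.Injective a) {m : ℕ}
    (hm : m ≤ k) : x ^ m ∈ span K (Set.range fun j => (x + algebraMap K A (a j)) ^ k) := by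
  have hdet := det_vandermonde_mul_diagonal_choose_ne_zero ha
  simpa only [add_algebraMap_pow_eq_sum, Nat.sub_sub_self hm] using
    mem_span_range_sum_smul_of_isUnit_det _ hdet.isUnit (fun m : Fin (k + 1) => x ^ (k - m : ℕ))
      ⟨k - m, by omega⟩

theorem common_field_of_shifted_powers_eq_top_general (L : Type*) [Field L] [Algebra ℚ L]
    (x : L) (hx : IntermediateField.adjoin ℚ {x} = ⊤)
    (k : ℕ) (hk : 1 ≤ k) (i : Fin (k + 1) → ℕ) (hi : Function.Injective i)
    (M : IntermediateField ℚ L)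
    (hM : ∀ j : Fin (k + 1), IntermediateField.adjoin ℚ {(x + (i j : L)) ^ k} = M) :
    M = ⊤ := by
  have hx_span : x ∈ span ℚ (Set.range fun j => (x + (i j : L)) ^ k) := by
    simpa only [pow_one, map_natCast] using pow_mem_span_range_add_algebraMap_pow x
      (a := fun j => (i j : ℚ)) (fun _ _ h => hi (Nat.cast_injective h)) hk
  have hspan_le : span ℚ (Set.range fun j => (x + (i j : L)) ^ k) ≤
      M.toSubalgebra.toSubmodule :=
    span_le.mpr <| Set.range_subset_iff.mpr fun j =>
      hM j ▸ IntermediateField.mem_adjoin_simple_self ℚ _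
  rw [eq_top_iff, ← hx, IntermediateField.adjoin_simple_le_iff]
  exact hspan_le hx_span

/-- Let `L/ℚ` be finite, `x` a primitive element and `k ≥ 1`. If `i 0, …, i k` are pairwise
distinct natural numbers such that all the fields `ℚ((x + iⱼ)^k)` are equal to a common
intermediate field `M`, then `M = L`. -/
theorem common_field_of_shifted_powers_eq_top (L : Type*) [Field L] [Algebra ℚ L]
    [FiniteDimensional ℚ L] (x : L) (hx : IntermediateField.adjoin ℚ {x} = ⊤)
    (k : ℕ) (hk : 1 ≤ k) (i : Fin (k + 1) → ℕ) (hi : Function.Injective i)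
    (M : IntermediateField ℚ L)
    (hM : ∀ j : Fin (k + 1), IntermediateField.adjoin ℚ {(x + (i j : L)) ^ k} = M) :
    M = ⊤ :=
  common_field_of_shifted_powers_eq_top_general L x hx k hk i hi M hM
end

section
/- Let L be a number field with ring of integers 𝒪 and V ≤ SL₂(𝒪) a subgroup of finite index. Let N₀ be such that every element of SL₂(L) is a product of at most N₀ elementary matrices. Then every element of SL₂(L) is a product of at most 3N₀ matrices, each from SL₂(ℚ) or from V. -/
/-!
Every `x ∈ L` has a rational `t ≠ 0` with `u₊(t² x)` and `u₋(t² x)` in `V`: some fixed `d > 0`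
has `g ^ d ∈ V` for all `g ∈ SL₂(𝒪)` (the normal core of `V` has finite index), and if `m x ∈ 𝒪`
with `m ∈ ℕ` nonzero, then `t = d m` works since `u±(w) ^ d = u±(d w)`. Conjugating by
`diag(t, t⁻¹) ∈ SL₂(ℚ)` turns `u±(t² x)` back into `u±(x)`, so each of the at most `N₀`
elementary factors of an element of `SL₂(L)` is replaced by three admissible ones.
-/

/-- The upper unitriangular matrix `u₊(r) = [[1, r], [0, 1]]` in `SL₂(L)`. -/
def upperUni {L : Type*} [Field L] (r : L) : Matrix.SpecialLinearGroup (Fin 2) L :=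
  ⟨!![1, r; 0, 1], by simp [Matrix.det_fin_two_of]⟩

/-- The lower unitriangular matrix `u₋(r) = [[1, 0], [r, 1]]` in `SL₂(L)`. -/
def lowerUni {L : Type*} [Field L] (r : L) : Matrix.SpecialLinearGroup (Fin 2) L :=
  ⟨!![1, 0; r, 1], by simp [Matrix.det_fin_two_of]⟩

open Matrix NumberField
open scoped MatrixGroups

theorem List.exists_prod_eq_of_forall_mem_prod {M : Type*} [Monoid M] {S T : Set M} {k : ℕ}
    (hST : ∀ s ∈ S, ∃ l : List M, l.length ≤ k ∧ (∀ t ∈ l, t ∈ T) ∧ l.prod = s)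
    (l : List M) (hl : ∀ s ∈ l, s ∈ S) :
    ∃ l' : List M, l'.length ≤ k * l.length ∧ (∀ t ∈ l', t ∈ T) ∧ l'.prod = l.prod := by
  induction l with
  | nil => exact ⟨[], by simp⟩
  | cons s l ih =>
    obtain ⟨ls, hls_len, hls_mem, hls_prod⟩ := hST s (hl s List.mem_cons_self)
    obtain ⟨l', hl'_len, hl'_mem, hl'_prod⟩ := ih fun s hs ↦ hl s (List.mem_cons_of_mem _ hs)
    refine ⟨ls ++ l', ?_, ?_, ?_⟩
    · simp only [List.length_append, List.length_cons, mul_add_one]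
      omega
    · simpa only [List.mem_append] using fun t ht ↦ ht.elim (hls_mem t) (hl'_mem t)
    · rw [List.prod_append, hls_prod, hl'_prod, List.prod_cons]

theorem Subgroup.exists_pow_mem_of_finiteIndex {G : Type*} [Group G] (H : Subgroup G)
    [H.FiniteIndex] : ∃ d : ℕ, d ≠ 0 ∧ ∀ g : G, g ^ d ∈ H :=
  ⟨H.normalCore.index, Subgroup.FiniteIndex.index_ne_zero,
    fun g ↦ H.normalCore_le (H.normalCore.pow_index_mem g)⟩

namespace Matrix.SpecialLinearGroup

variable {R : Type*} [CommRing R]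

def upperUnitri (r : R) : SL(2, R) :=
  ⟨!![1, r; 0, 1], by simp [det_fin_two_of]⟩

def lowerUnitri (r : R) : SL(2, R) :=
  ⟨!![1, 0; r, 1], by simp [det_fin_two_of]⟩

def diagUnit (u : Rˣ) : SL(2, R) :=
  ⟨!![(u : R), 0; 0, ↑u⁻¹], by simp [det_fin_two_of]⟩

@[simp]
theorem coe_upperUnitri (r : R) : (upperUnitri r : Matrix (Fin 2) (Fin 2) R) = !![1, r; 0, 1] :=
  rfl

@[simp]
theorem coe_lowerUnitri (r : R) : (lowerUnitri r : Matrix (Fin 2) (Fin 2) R) = !![1, 0; r, 1] :=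
  rfl

@[simp]
theorem coe_diagUnit (u : Rˣ) :
    (diagUnit u : Matrix (Fin 2) (Fin 2) R) = !![(u : R), 0; 0, ↑u⁻¹] :=
  rfl

theorem upperUnitri_pow (r : R) (n : ℕ) : upperUnitri r ^ n = upperUnitri (n * r) := by
  induction n with
  | zero => ext i j; fin_cases i <;> fin_cases j <;> simp
  | succ n ih =>
    rw [pow_succ, ih]
    ext i j; fin_cases i <;> fin_cases j <;> simp [coe_mul]; ring

theorem lowerUnitri_pow (r : R) (n : ℕ) : lowerUnitri r ^ n = lowerUnitri (n * r) := by
  induction n with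
  | zero => ext i j; fin_cases i <;> fin_cases j <;> simp
  | succ n ih =>
    rw [pow_succ, ih]
    ext i j; fin_cases i <;> fin_cases j <;> simp [coe_mul]; ring

theorem map_upperUnitri {S : Type*} [CommRing S] (f : R →+* S) (r : R) :
    map f (upperUnitri r) = upperUnitri (f r) := by
  ext i j; fin_cases i <;> fin_cases j <;> simp

theorem map_lowerUnitri {S : Type*} [CommRing S] (f : R →+* S) (r : R) :
    map f (lowerUnitri r) = lowerUnitri (f r) := by
  ext i j; fin_cases i <;> fin_cases j <;> simp

theorem map_diagUnit {S : Type*} [CommRing S] (f : R →+* S) (u : Rˣ) :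
    map f (diagUnit u) = diagUnit (Units.map f u) := by
  ext i j; fin_cases i <;> fin_cases j <;> simp

theorem diagUnit_inv_mul_upperUnitri_mul_diagUnit (u : Rˣ) (r : R) :
    diagUnit u⁻¹ * upperUnitri ((u : R) ^ 2 * r) * diagUnit u = upperUnitri r := by
  ext i j; fin_cases i <;> fin_cases j <;> simp [coe_mul]
  linear_combination r * (↑u⁻¹ * ↑u + 1) * u.inv_mul

theorem diagUnit_mul_lowerUnitri_mul_diagUnit_inv (u : Rˣ) (r : R) :
    diagUnit u * lowerUnitri ((u : R) ^ 2 * r) * diagUnit u⁻¹ = lowerUnitri r := by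
  ext i j; fin_cases i <;> fin_cases j <;> simp [coe_mul]
  linear_combination r * (↑u⁻¹ * ↑u + 1) * u.inv_mul

theorem exists_unitri_nat_mul_mem_of_finiteIndex (V : Subgroup SL(2, R)) [V.FiniteIndex] :
    ∃ d : ℕ, d ≠ 0 ∧ ∀ w : R, upperUnitri (d * w) ∈ V ∧ lowerUnitri (d * w) ∈ V := by
  obtain ⟨d, hd, hV⟩ := V.exists_pow_mem_of_finiteIndex
  exact ⟨d, hd, fun w ↦ ⟨upperUnitri_pow w d ▸ hV _, lowerUnitri_pow w d ▸ hV _⟩⟩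

end Matrix.SpecialLinearGroup

namespace NumberField

open Matrix.SpecialLinearGroup

variable {L : Type*} [Field L] [NumberField L]

theorem exists_rat_sq_mul_unitri_mem_map (V : Subgroup SL(2, 𝓞 L)) [V.FiniteIndex] (x : L) :
    ∃ t : ℚˣ,
      upperUnitri (algebraMap ℚ L t ^ 2 * x) ∈ V.map (SpecialLinearGroup.map (algebraMap (𝓞 L) L)) ∧
      lowerUnitri (algebraMap ℚ L t ^ 2 * x) ∈
        V.map (SpecialLinearGroup.map (algebraMap (𝓞 L) L)) := by
  obtain ⟨m, z, hm, hz⟩ := ((IsFractionRing.isAlgebraic_iff ℤ ℚ L).mpr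
    (Algebra.IsAlgebraic.isAlgebraic x)).exists_nsmul_eq (𝓞 L)
  obtain ⟨d, hd, hV⟩ := exists_unitri_nat_mul_mem_of_finiteIndex V
  have hsq : algebraMap ℚ L (d * m) ^ 2 * x = algebraMap (𝓞 L) L (d * (d * m * z)) := by
    rw [map_mul, map_mul, map_mul, ← hz, nsmul_eq_mul]
    push_cast
    ring
  refine ⟨Units.mk0 (d * m) (by positivity), ?_, ?_⟩
  · rw [Units.val_mk0, hsq, ← map_upperUnitri]
    exact Subgroup.mem_map_of_mem _ (hV _).1
  · rw [Units.val_mk0, hsq, ← map_lowerUnitri]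
    exact Subgroup.mem_map_of_mem _ (hV _).2

theorem exists_prod_three_rat_or_mem_map_eq_unitri (V : Subgroup SL(2, 𝓞 L)) [V.FiniteIndex]
    {g : SL(2, L)} (hg : ∃ r : L, g = upperUni r ∨ g = lowerUni r) :
    ∃ l : List SL(2, L), l.length ≤ 3 ∧
      (∀ h ∈ l, h ∈ ((SpecialLinearGroup.map (n := Fin 2) (algebraMap ℚ L)).range : Set SL(2, L)) ∪
        V.map (SpecialLinearGroup.map (algebraMap (𝓞 L) L))) ∧ l.prod = g := by
  obtain ⟨r, hr⟩ := hg
  obtain ⟨t, hupper, hlower⟩ := exists_rat_sq_mul_unitri_mem_map V r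
  set φ := Units.map (algebraMap ℚ L : ℚ →* L)
  have hdiag (s : ℚˣ) : diagUnit (φ s) ∈ (SpecialLinearGroup.map (algebraMap ℚ L)).range :=
    ⟨diagUnit s, map_diagUnit _ s⟩
  set u := φ t
  have hdiag_inv : diagUnit u⁻¹ ∈ (SpecialLinearGroup.map (algebraMap ℚ L)).range :=
    map_inv φ t ▸ hdiag t⁻¹
  rcases hr with rfl | rfl
  · refine ⟨[diagUnit u⁻¹, upperUnitri (u ^ 2 * r), diagUnit u], le_rfl, ?_, ?_⟩
    · simp only [List.mem_cons, List.not_mem_nil, or_false, forall_eq_or_imp, forall_eq]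
      exact ⟨Or.inl hdiag_inv, Or.inr hupper, Or.inl (hdiag t)⟩
    · -- over a field, `upperUni` and `lowerUni` are `upperUnitri` and `lowerUnitri` by `rfl`
      simp only [List.prod_cons, List.prod_nil, mul_one, ← mul_assoc]
      exact diagUnit_inv_mul_upperUnitri_mul_diagUnit u r
  · refine ⟨[diagUnit u, lowerUnitri (u ^ 2 * r), diagUnit u⁻¹], le_rfl, ?_, ?_⟩
    · simp only [List.mem_cons, List.not_mem_nil, or_false, forall_eq_or_imp, forall_eq]
      exact ⟨Or.inl (hdiag t), Or.inr hlower, Or.inl hdiag_inv⟩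
    · simp only [List.prod_cons, List.prod_nil, mul_one, ← mul_assoc]
      exact diagUnit_mul_lowerUnitri_mul_diagUnit_inv u r

end NumberField

/-- Let `L` be a number field with ring of integers `𝒪`, `V ≤ SL₂(𝒪)` of finite index,
and suppose every element of `SL₂(L)` is a product of at most `N₀` elementary matrices.
Then every element of `SL₂(L)` is a product of at most `3N₀` matrices, each from
(the image of) `SL₂(ℚ)` or from `V`. -/
theorem SL2_bounded_generation_by_rationals_and_finite_index (L : Type*) [Field L]
    [NumberField L]
    (V : Subgroup (Matrix.SpecialLinearGroup (Fin 2) (NumberField.RingOfIntegers L)))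
    (hV : V.FiniteIndex) (N₀ : ℕ)
    (hN₀ : ∀ g : Matrix.SpecialLinearGroup (Fin 2) L,
      ∃ l : List (Matrix.SpecialLinearGroup (Fin 2) L), l.length ≤ N₀ ∧
        (∀ m ∈ l, ∃ r : L, m = upperUni r ∨ m = lowerUni r) ∧ l.prod = g) :
    ∀ g : Matrix.SpecialLinearGroup (Fin 2) L,
      ∃ l : List (Matrix.SpecialLinearGroup (Fin 2) L), l.length ≤ 3 * N₀ ∧
        (∀ m ∈ l,
          m ∈ (Matrix.SpecialLinearGroup.map (n := Fin 2) (algebraMap ℚ L)).range ∨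
          m ∈ V.map (Matrix.SpecialLinearGroup.map
                (algebraMap (NumberField.RingOfIntegers L) L))) ∧
        l.prod = g := by
  intro g
  obtain ⟨l, hl_len, hl_unitri, rfl⟩ := hN₀ g
  obtain ⟨l', hl'_len, hl'_mem, hl'_prod⟩ := List.exists_prod_eq_of_forall_mem_prod
    (fun _ ↦ NumberField.exists_prod_three_rat_or_mem_map_eq_unitri V) l hl_unitri
  exact ⟨l', hl'_len.trans (Nat.mul_le_mul_left 3 hl_len), hl'_mem, hl'_prod⟩
end

section
/- Let k be a field and n ≥ 3. Then every quasi-morphism f : SLₙ(k) → ℝ is bounded. -/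
/-!
Gaussian elimination writes every element of `SLₙ(k)` as a product of at most `n (n + 1)`
elementary transvections, and a quasimorphism `f` of defect `D` satisfies
`|f (g₁ ⋯ gₘ)| ≤ |f 1| + m (B + D)` as soon as `|f gᵢ| ≤ B`. It therefore suffices to bound `f` on
transvections. For `n ≥ 3` the diagonal matrix with entry `c` at `i`, `c⁻¹` at a third index `l`
and `1` elsewhere has determinant one and conjugates `1 + E_ij` to `1 + c E_ij`; since a
quasimorphism moves by at most `|f 1| + 3 D` under conjugation, `f` is bounded on all
transvections by its values on the finitely many `1 + E_ij`.
-/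

namespace Matrix

namespace TransvectionStruct

section CommRing

variable {R ι κ : Type*} [CommRing R] [Fintype ι] [DecidableEq ι] [Fintype κ] [DecidableEq κ]

theorem exists_list_prod_eq_of_mul_mul_eq {M N : Matrix ι ι R} {m : ℕ}
    (L L' : List (TransvectionStruct ι R))
    (h : (L.map toMatrix).prod * M * (L'.map toMatrix).prod = N)
    (hN : ∃ L₀ : List (TransvectionStruct ι R), L₀.length ≤ m ∧ (L₀.map toMatrix).prod = N) :
    ∃ L₀ : List (TransvectionStruct ι R),
      L₀.length ≤ L.length + m + L'.length ∧ (L₀.map toMatrix).prod = M := by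
  obtain ⟨L₀, hL₀, rfl⟩ := hN
  refine ⟨L.reverse.map TransvectionStruct.inv ++ L₀ ++ L'.reverse.map TransvectionStruct.inv,
    by simp; omega, ?_⟩
  simp only [List.map_append, List.prod_append, List.map_map, ← h, ← mul_assoc,
    reverse_inv_prod_mul_prod, one_mul]
  simp only [mul_assoc, prod_mul_reverse_inv_prod, mul_one]

theorem exists_list_prod_eq_of_reindex (e : ι ≃ κ) {M : Matrix ι ι R} {m : ℕ}
    (h : ∃ L : List (TransvectionStruct κ R),
      L.length ≤ m ∧ (L.map toMatrix).prod = reindex e e M) :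
    ∃ L : List (TransvectionStruct ι R), L.length ≤ m ∧ (L.map toMatrix).prod = M := by
  obtain ⟨L, hL, hLM⟩ := h
  refine ⟨L.map (reindexEquiv e.symm), by simpa using hL, ?_⟩
  rw [List.map_map, toMatrix_reindexEquiv_prod, hLM]
  simp

end CommRing

variable {k ι : Type*} [Field k] [Fintype ι] [DecidableEq ι]

theorem exists_list_mul_apply_self_eq_one {M : Matrix ι ι k} (hM : M.det = 1) (p : ι) :
    ∃ L : List (TransvectionStruct ι k), L.length ≤ 2 ∧ ((L.map toMatrix).prod * M) p p = 1 := by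
  by_cases hcol : ∃ q ≠ p, M q p ≠ 0
  · obtain ⟨q, hqp, hMqp⟩ := hcol
    refine ⟨[⟨p, q, hqp.symm, (1 - M p p) / M q p⟩], by simp, ?_⟩
    simp only [List.map_cons, List.map_nil, List.prod_cons, List.prod_nil, mul_one, toMatrix_mk,
      transvection_mul_apply_same]
    field_simp
    ring
  push Not at hcol
  have hMpp : M p p ≠ 0 := fun h0 => one_ne_zero <| hM.symm.trans <|
    det_eq_zero_of_column_eq_zero p fun q => by
      rcases eq_or_ne q p with rfl | hq
      exacts [h0, hcol q hq]
  by_cases hsub : ∃ q, q ≠ p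
  · obtain ⟨q, hqp⟩ := hsub
    -- adding row `p` to row `q` first makes `q` a usable pivot for column `p`
    refine ⟨[⟨p, q, hqp.symm, (1 - M p p) / M p p⟩, ⟨q, p, hqp, 1⟩], by simp, ?_⟩
    simp only [List.map_cons, List.map_nil, List.prod_cons, List.prod_nil, mul_one, toMatrix_mk,
      mul_assoc, transvection_mul_apply_same, transvection_mul_apply_of_ne _ _ _ _ hqp.symm,
      hcol q hqp]
    field_simp
    ring
  · push Not at hsub
    have : Subsingleton ι := ⟨fun a b => (hsub a).trans (hsub b).symm⟩
    exact ⟨[], by simp, by simpa [det_eq_elem_of_subsingleton M p] using hM⟩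

end TransvectionStruct

variable {k : Type*} [Field k]

namespace Pivot

open TransvectionStruct Sum Unit

theorem exists_list_transvec_mul_mul_list_transvec_eq_fromBlocks {r : ℕ}
    (M : Matrix (Fin r ⊕ Unit) (Fin r ⊕ Unit) k) (hM : M (inr unit) (inr unit) = 1) :
    ∃ (L L' : List (TransvectionStruct (Fin r ⊕ Unit) k)) (A : Matrix (Fin r) (Fin r) k),
      L.length = r ∧ L'.length = r ∧
        (L.map toMatrix).prod * M * (L'.map toMatrix).prod = fromBlocks A 0 0 1 := by
  let L : List (TransvectionStruct (Fin r ⊕ Unit) k) := List.ofFn fun i : Fin r =>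
    ⟨inl i, inr unit, by simp, -M (inl i) (inr unit) / M (inr unit) (inr unit)⟩
  let L' : List (TransvectionStruct (Fin r ⊕ Unit) k) := List.ofFn fun i : Fin r =>
    ⟨inr unit, inl i, by simp, -M (inr unit) (inl i) / M (inr unit) (inr unit)⟩
  have hL : L.map toMatrix = listTransvecCol M := by
    simp [L, listTransvecCol, Function.comp_def]
  have hL' : L'.map toMatrix = listTransvecRow M := by
    simp [L', listTransvecRow, Function.comp_def]
  set B := (listTransvecCol M).prod * M * (listTransvecRow M).prod with hBdef
  have hB := isTwoBlockDiagonal_listTransvecCol_mul_mul_listTransvecRow M (by simp [hM])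
  have hB₂₂ : toBlocks₂₂ B = 1 := by
    have hrow : listTransvecRow M = listTransvecRow ((listTransvecCol M).prod * M) := by
      simp [listTransvecRow, listTransvecCol_mul_last_row]
    ext ⟨⟩ ⟨⟩
    rw [toBlocks₂₂, of_apply, hBdef, hrow, mul_listTransvecRow_last_col,
      listTransvecCol_mul_last_row, hM, one_apply_eq]
  refine ⟨L, L', toBlocks₁₁ B, by simp [L], by simp [L'], ?_⟩
  rw [hL, hL', ← hB.1, ← hB.2, ← hB₂₂, fromBlocks_toBlocks]

theorem exists_list_transvec_prod_eq_of_det_eq_one_induction {r m : ℕ}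
    (ih : ∀ A : Matrix (Fin r) (Fin r) k, A.det = 1 →
      ∃ L : List (TransvectionStruct (Fin r) k), L.length ≤ m ∧ (L.map toMatrix).prod = A)
    {M : Matrix (Fin r ⊕ Unit) (Fin r ⊕ Unit) k} (hM : M.det = 1) :
    ∃ L : List (TransvectionStruct (Fin r ⊕ Unit) k),
      L.length ≤ 2 * r + m + 2 ∧ (L.map toMatrix).prod = M := by
  obtain ⟨L₀, hL₀, hpivot⟩ := exists_list_mul_apply_self_eq_one hM (inr unit)
  obtain ⟨L, L', A, hL, hL', hblock⟩ :=
    exists_list_transvec_mul_mul_list_transvec_eq_fromBlocks _ hpivot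
  have hA : A.det = 1 := by
    simpa [det_fromBlocks_zero₂₁, hM] using (congrArg det hblock).symm
  obtain ⟨LA, hLA, rfl⟩ := ih A hA
  have hblock_prod :
      ((LA.map (sumInl Unit)).map toMatrix).prod = fromBlocks (LA.map toMatrix).prod 0 0 1 := by
    simpa [List.map_map] using sumInl_toMatrix_prod_mul Unit 1 LA (1 : Matrix Unit Unit k)
  rw [← mul_assoc, ← List.prod_append, ← List.map_append] at hblock
  obtain ⟨L₁, hL₁, hL₁M⟩ :=
    exists_list_prod_eq_of_mul_mul_eq _ _ hblock ⟨_, le_refl _, hblock_prod⟩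
  exact ⟨L₁, by simp at hL₁; omega, hL₁M⟩

end Pivot

open TransvectionStruct in
theorem exists_list_transvec_prod_eq_of_det_eq_one {ι : Type*} [Fintype ι] [DecidableEq ι]
    {M : Matrix ι ι k} (hM : M.det = 1) :
    ∃ L : List (TransvectionStruct ι k),
      L.length ≤ Fintype.card ι * (Fintype.card ι + 1) ∧ (L.map toMatrix).prod = M := by
  suffices h : ∀ (r : ℕ) (A : Matrix (Fin r) (Fin r) k), A.det = 1 →
      ∃ L : List (TransvectionStruct (Fin r) k), L.length ≤ r * (r + 1) ∧ (L.map toMatrix).prod = A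
    from exists_list_prod_eq_of_reindex (Fintype.equivFin ι) (h _ _ (by simpa using hM))
  intro r
  induction r with
  | zero => exact fun A _ => ⟨[], le_refl _, Subsingleton.elim _ _⟩
  | succ r ih =>
    intro A hA
    let e : Fin (r + 1) ≃ Fin r ⊕ Unit := Fintype.equivOfCardEq (by simp)
    obtain ⟨L, hL, hLA⟩ := Pivot.exists_list_transvec_prod_eq_of_det_eq_one_induction ih
      (M := reindex e e A) (by simpa using hA)
    exact exists_list_prod_eq_of_reindex e ⟨L, by nlinarith, hLA⟩

namespace SpecialLinearGroup

variable {ι : Type*} [Fintype ι] [DecidableEq ι]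

open TransvectionStruct in
theorem exists_list_transvec_prod_eq (g : SpecialLinearGroup ι k) :
    ∃ L : List (TransvectionStruct ι k), L.length ≤ Fintype.card ι * (Fintype.card ι + 1) ∧
      (L.map toSpecialLinearGroup).prod = g := by
  obtain ⟨L, hL, hLg⟩ := exists_list_transvec_prod_eq_of_det_eq_one g.2
  refine ⟨L, hL, Subtype.ext ?_⟩
  simp_rw [← coeMonoidHom_apply, map_list_prod, List.map_map, Function.comp_def,
    coeMonoidHom_apply, toSpecialLinearGroup_coe, hLg]

theorem diag2n_mul_transvection_mul_inv {i j l : ι} (hij : i ≠ j) (hil : i ≠ l) (hjl : j ≠ l)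
    {a : k} (ha : a ≠ 0) (c : k) :
    diag2n hil a ha * transvection hij c * (diag2n hil a ha)⁻¹ = transvection hij (a * c) := by
  rw [mul_inv_eq_iff_eq_mul]
  ext x y
  simp only [coe_mul, diag2n_coe, transvection_coe, mul_add, add_mul, diagonal_mul, mul_diagonal,
    add_apply, single_apply, one_apply]
  grind

end SpecialLinearGroup

end Matrix

def IsQuasimorphism {G : Type*} [Group G] (f : G → ℝ) (D : ℝ) : Prop :=
  ∀ g h : G, |f (g * h) - f g - f h| ≤ D

namespace IsQuasimorphism

variable {G : Type*} [Group G] {f : G → ℝ} {D : ℝ}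

theorem defect_nonneg (hf : IsQuasimorphism f D) : 0 ≤ D :=
  (abs_nonneg _).trans (hf 1 1)

theorem abs_apply_mul_le (hf : IsQuasimorphism f D) (g h : G) :
    |f (g * h)| ≤ |f g| + |f h| + D := calc
  |f (g * h)| = |(f (g * h) - f g - f h) + f g + f h| := by ring_nf
  _ ≤ |f (g * h) - f g - f h| + |f g| + |f h| := abs_add_three _ _ _
  _ ≤ |f g| + |f h| + D := by linarith [hf g h]

theorem abs_apply_conj_sub_le (hf : IsQuasimorphism f D) (g h : G) :
    |f (h * g * h⁻¹) - f g| ≤ |f 1| + 3 * D := by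
  have h₁ := abs_le.1 (hf (h * g) h⁻¹)
  have h₂ := abs_le.1 (hf h g)
  have h₃ := abs_le.1 (hf h h⁻¹)
  rw [mul_inv_cancel] at h₃
  have := neg_abs_le (f 1)
  have := le_abs_self (f 1)
  rw [abs_le]
  constructor <;> linarith

theorem abs_apply_list_prod_le (hf : IsQuasimorphism f D) {B : ℝ} (L : List G)
    (hL : ∀ x ∈ L, |f x| ≤ B) : |f L.prod| ≤ |f 1| + L.length * (B + D) := by
  induction L with
  | nil => simp
  | cons a L ih =>
    have ha := hL a List.mem_cons_self
    have hprod := ih fun x hx => hL x (List.mem_cons_of_mem a hx)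
    rw [List.prod_cons, List.length_cons, Nat.cast_succ]
    linarith [hf.abs_apply_mul_le a L.prod]

open Matrix SpecialLinearGroup in
theorem exists_abs_apply_transvection_le {k ι : Type*} [Field k] [Fintype ι] [DecidableEq ι]
    {f : SpecialLinearGroup ι k → ℝ} (hf : IsQuasimorphism f D) (hι : 3 ≤ Fintype.card ι) :
    ∃ B, ∀ t : TransvectionStruct ι k, |f t.toSpecialLinearGroup| ≤ B := by
  obtain ⟨B₀, hB₀⟩ :=
    Finite.exists_le fun p : {p : ι × ι // p.1 ≠ p.2} => |f (transvection p.2 1)|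
  refine ⟨B₀ + |f 1| + 3 * D, fun ⟨i, j, hij, c⟩ => ?_⟩
  have hB₀ij := hB₀ ⟨(i, j), hij⟩
  have hD := hf.defect_nonneg
  rw [TransvectionStruct.toSpecialLinearGroup_mk]
  rcases eq_or_ne c 0 with rfl | hc
  · rw [transvection_coeff_zero]
    linarith [abs_nonneg (f (transvection hij 1))]
  obtain ⟨l, -, hl⟩ := Finset.exists_mem_notMem_of_card_lt_card
    (s := {i, j}) (t := Finset.univ) (Finset.card_le_two.trans_lt (by rw [Finset.card_univ]; omega))
  simp only [Finset.mem_insert, Finset.mem_singleton, not_or] at hl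
  have hconj := diag2n_mul_transvection_mul_inv hij (Ne.symm hl.1) (Ne.symm hl.2) hc 1
  rw [mul_one] at hconj
  have := hf.abs_apply_conj_sub_le (transvection hij 1) (diag2n (Ne.symm hl.1) c hc)
  rw [hconj] at this
  linarith [abs_sub_abs_le_abs_sub (f (transvection hij c)) (f (transvection hij 1))]

end IsQuasimorphism

/-- For a field `k` and `n ≥ 3`, every quasi-morphism `f : SLₙ(k) → ℝ` is bounded. -/
theorem quasimorphism_SLn_bounded {k : Type*} [Field k] (n : ℕ) (hn : 3 ≤ n)
    (f : Matrix.SpecialLinearGroup (Fin n) k → ℝ)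
    (hf : ∃ D : ℝ, ∀ g h : Matrix.SpecialLinearGroup (Fin n) k,
      |f (g * h) - f g - f h| ≤ D) :
    ∃ C : ℝ, ∀ g : Matrix.SpecialLinearGroup (Fin n) k, |f g| ≤ C := by
  obtain ⟨D, hD⟩ : ∃ D, IsQuasimorphism f D := hf
  obtain ⟨B, hB⟩ := hD.exists_abs_apply_transvection_le (by simpa using hn)
  refine ⟨|f 1| + n * (n + 1) * (|B| + D), fun g => ?_⟩
  obtain ⟨L, hL, rfl⟩ := Matrix.SpecialLinearGroup.exists_list_transvec_prod_eq g
  have hL' : (L.length : ℝ) ≤ n * (n + 1) := by exact_mod_cast (by simpa using hL)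
  refine (hD.abs_apply_list_prod_le (B := |B|) _ fun x hx => ?_).trans ?_
  · obtain ⟨t, -, rfl⟩ := List.mem_map.1 hx
    exact (hB t).trans (le_abs_self B)
  · rw [List.length_map]
    have := add_nonneg (abs_nonneg B) hD.defect_nonneg
    gcongr
end
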